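/- Let K_θ and K_α be transition kernels on E such that for every x' ∈ E the measures K_θ(x',·) and K_α(x',·) are mutually absolutely continuous, and suppose there exist constants c(θ,α) > 0 and d(θ,α) < ∞ with c(θ,α) ≤ (dK_θ(x',·)/dK_α(x',·))(x) ≤ c(θ,α)·exp(d(θ,α)) for all x, x'. Then for any probability measure ν on E and any bounded measurable g: E → (0,∞), the probability measures μ_θ(dx) ∝ ∫ g(x) K_θ(x',dx) ν(dx') and μ_α(dx) ∝ ∫ g(x) K_α(x',dx) ν(dx') satisfy h(μ_θ, μ_α) ≤ log( sup_{x',x} dK_θ/dK_α · sup_{x',x} dK_α/dK_θ ) ≤ d(θ,α), where h is the Hilbert projective metric. -/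

import Mathlib

open MeasureTheory ENNReal ProbabilityTheory
open scoped NNReal

noncomputable def hilbertDist {E : Type*} [MeasurableSpace E] (μ ν : Measure E) : ℝ :=
  Real.log (((⨆ A : {s : Set E // MeasurableSet s}, μ A.1 / ν A.1) *
    (⨆ A : {s : Set E // MeasurableSet s}, ν A.1 / μ A.1)).toReal)

/-- The one-step filter update `μ(dx) ∝ ∫ g(x) K(x',dx) ν(dx')`, i.e. the normalization of
the measure `(ν.bind K).withDensity g`. -/
noncomputable def filterUpdate {E : Type*} [MeasurableSpace E]
    (K : Kernel E E) (g : E → ℝ) (ν : Measure E) : Measure E :=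
  ((((ν.bind (fun x => K x)).withDensity fun x => ENNReal.ofReal (g x)) Set.univ)⁻¹) •
    ((ν.bind (fun x => K x)).withDensity fun x => ENNReal.ofReal (g x))

/-- Bounds on an iterated supremum of a doubly-indexed bounded family. -/
lemma sup2_bounds {E : Type*} [Nonempty E] (f : E → E → ℝ) (lo hi : ℝ)
    (h : ∀ x' x, lo ≤ f x' x ∧ f x' x ≤ hi) :
    (lo ≤ ⨆ x', ⨆ x, f x' x) ∧ ((⨆ x', ⨆ x, f x' x) ≤ hi) ∧
      ∀ x' x, f x' x ≤ ⨆ x', ⨆ x, f x' x := by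
  have hbdd : ∀ x', BddAbove (Set.range fun x => f x' x) :=
    fun x' => ⟨hi, by rintro _ ⟨x, rfl⟩; exact (h x' x).2⟩
  have houter : BddAbove (Set.range fun x' => ⨆ x, f x' x) :=
    ⟨hi, by rintro _ ⟨x', rfl⟩; exact ciSup_le fun x => (h x' x).2⟩
  have hpt : ∀ x' x, f x' x ≤ ⨆ x', ⨆ x, f x' x :=
    fun x' x => le_ciSup_of_le houter x' (le_ciSup (hbdd x') x)
  obtain ⟨a⟩ := ‹Nonempty E›
  exact ⟨le_trans (h a a).1 (hpt a a),
    ciSup_le fun x' => ciSup_le fun x => (h x' x).2, hpt⟩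

/-- If the densities `dK1/dK2` are bounded by `S`, then the unnormalized filter-update
measures compare with constant `S`. -/
lemma withDensity_bind_le {E : Type*} [MeasurableSpace E]
    (K1 K2 : Kernel E E) [IsMarkovKernel K1] [IsMarkovKernel K2]
    (hac : ∀ x', (K1 x') ≪ (K2 x'))
    (S : ℝ) (hS : ∀ x' x, (K1 x').rnDeriv (K2 x') x ≤ ENNReal.ofReal S)
    (ν : Measure E) (g : E → ℝ) (A : Set E) (hA : MeasurableSet A) :
    ((ν.bind fun x => K1 x).withDensity fun x => ENNReal.ofReal (g x)) A ≤
      ENNReal.ofReal S *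
        ((ν.bind fun x => K2 x).withDensity fun x => ENNReal.ofReal (g x)) A := by
  have hKle : ∀ x', (K1 x') ≤ (ENNReal.ofReal S) • (K2 x') := by
    intro x'
    calc K1 x' = (K2 x').withDensity ((K1 x').rnDeriv (K2 x')) :=
          (Measure.withDensity_rnDeriv_eq _ _ (hac x')).symm
      _ ≤ (K2 x').withDensity (fun _ => ENNReal.ofReal S) :=
          withDensity_mono (Filter.Eventually.of_forall (hS x'))
      _ = (ENNReal.ofReal S) • (K2 x') := withDensity_const _
  have hble : (ν.bind fun x => K1 x) ≤ (ENNReal.ofReal S) • (ν.bind fun x => K2 x) := by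
    refine Measure.le_iff.mpr fun s hs => ?_
    rw [Measure.bind_apply hs K1.measurable.aemeasurable, Measure.smul_apply, smul_eq_mul,
      Measure.bind_apply hs K2.measurable.aemeasurable, ← lintegral_const_mul' _ _ ofReal_ne_top]
    exact lintegral_mono fun x' => by
      simpa [Measure.smul_apply, smul_eq_mul] using (hKle x') s
  rw [withDensity_apply _ hA, withDensity_apply _ hA, ← smul_eq_mul, ← lintegral_smul_measure,
    ← Measure.restrict_smul]
  exact lintegral_mono' (Measure.restrict_mono subset_rfl hble) le_rfl

/-- if the kernels `K_θ(x',·)` and `K_α(x',·)` are mutually absolutely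
continuous with densities bounded between `c` and `c·exp d`, then the one-step filter
updates satisfy `h(μ_θ, μ_α) ≤ log(sup dK_θ/dK_α · sup dK_α/dK_θ) ≤ d`. -/
theorem step_error_hilbert_bound {E : Type*} [MeasurableSpace E]
    (Kθ Kα : Kernel E E) [IsMarkovKernel Kθ] [IsMarkovKernel Kα]
    (hac : ∀ x' : E, (Kθ x') ≪ (Kα x') ∧ (Kα x') ≪ (Kθ x'))
    (c d : ℝ) (hc : 0 < c)
    (hbound : ∀ x' x : E,
      c ≤ ((Kθ x').rnDeriv (Kα x') x).toReal ∧
        ((Kθ x').rnDeriv (Kα x') x).toReal ≤ c * Real.exp d)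
    (hbound' : ∀ x' x : E,
      (c * Real.exp d)⁻¹ ≤ ((Kα x').rnDeriv (Kθ x') x).toReal ∧
        ((Kα x').rnDeriv (Kθ x') x).toReal ≤ c⁻¹)
    (ν : Measure E) [IsProbabilityMeasure ν]
    (g : E → ℝ) (hg : Measurable g) (hgpos : ∀ x, 0 < g x) (hgbdd : ∃ M, ∀ x, g x ≤ M)
    (hθnorm : (((ν.bind (fun x => Kθ x)).withDensity fun x => ENNReal.ofReal (g x))
        Set.univ ≠ 0))
    (hαnorm : (((ν.bind (fun x => Kα x)).withDensity fun x => ENNReal.ofReal (g x))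
        Set.univ ≠ 0)) :
    hilbertDist (filterUpdate Kθ g ν) (filterUpdate Kα g ν) ≤
        Real.log ((⨆ x' : E, ⨆ x : E, ((Kθ x').rnDeriv (Kα x') x).toReal) *
          (⨆ x' : E, ⨆ x : E, ((Kα x').rnDeriv (Kθ x') x).toReal)) ∧
      Real.log ((⨆ x' : E, ⨆ x : E, ((Kθ x').rnDeriv (Kα x') x).toReal) *
          (⨆ x' : E, ⨆ x : E, ((Kα x').rnDeriv (Kθ x') x).toReal)) ≤ d := by
  -- `E` is nonempty since it carries a probability measure
  have hE : Nonempty E := by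
    by_contra h
    rw [not_nonempty_iff] at h
    have h1 : ν Set.univ = 1 := measure_univ
    rw [Set.univ_eq_empty_iff.mpr h, measure_empty] at h1
    exact zero_ne_one h1
  obtain ⟨M, hM⟩ := hgbdd
  have hced : 0 < c * Real.exp d := mul_pos hc (Real.exp_pos d)
  set S₁ : ℝ := ⨆ x' : E, ⨆ x : E, ((Kθ x').rnDeriv (Kα x') x).toReal with hS₁def
  set S₂ : ℝ := ⨆ x' : E, ⨆ x : E, ((Kα x').rnDeriv (Kθ x') x).toReal with hS₂def
  obtain ⟨hS₁lo, hS₁hi, hS₁pt⟩ :=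
    sup2_bounds (fun x' x => ((Kθ x').rnDeriv (Kα x') x).toReal) c (c * Real.exp d) hbound
  obtain ⟨hS₂lo, hS₂hi, hS₂pt⟩ :=
    sup2_bounds (fun x' x => ((Kα x').rnDeriv (Kθ x') x).toReal) (c * Real.exp d)⁻¹ c⁻¹ hbound'
  have hS₁pos : 0 < S₁ := lt_of_lt_of_le hc hS₁lo
  have hS₂pos : 0 < S₂ := lt_of_lt_of_le (inv_pos.mpr hced) hS₂lo
  -- pointwise ENNReal bounds on the Radon–Nikodym derivatives
  have hd₁ : ∀ x' x, (Kθ x').rnDeriv (Kα x') x ≤ ENNReal.ofReal S₁ := by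
    intro x' x
    have hne : (Kθ x').rnDeriv (Kα x') x ≠ ∞ := by
      intro htop
      have := (hbound x' x).1
      rw [htop, ENNReal.toReal_top] at this
      linarith
    rw [← ENNReal.ofReal_toReal hne]
    exact ENNReal.ofReal_le_ofReal (hS₁pt x' x)
  have hd₂ : ∀ x' x, (Kα x').rnDeriv (Kθ x') x ≤ ENNReal.ofReal S₂ := by
    intro x' x
    have hne : (Kα x').rnDeriv (Kθ x') x ≠ ∞ := by
      intro htop
      have := (hbound' x' x).1
      rw [htop, ENNReal.toReal_top] at this
      have : (0:ℝ) < (c * Real.exp d)⁻¹ := inv_pos.mpr hced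
      linarith
    rw [← ENNReal.ofReal_toReal hne]
    exact ENNReal.ofReal_le_ofReal (hS₂pt x' x)
  -- unnormalized measures
  set mθ := ((ν.bind fun x => Kθ x).withDensity fun x => ENNReal.ofReal (g x)) with hmθ
  set mα := ((ν.bind fun x => Kα x).withDensity fun x => ENNReal.ofReal (g x)) with hmα
  have hm₁ : ∀ A : Set E, MeasurableSet A → mθ A ≤ ENNReal.ofReal S₁ * mα A :=
    fun A hA => withDensity_bind_le Kθ Kα (fun x' => (hac x').1) S₁ hd₁ ν g A hA
  have hm₂ : ∀ A : Set E, MeasurableSet A → mα A ≤ ENNReal.ofReal S₂ * mθ A :=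
    fun A hA => withDensity_bind_le Kα Kθ (fun x' => (hac x').2) S₂ hd₂ ν g A hA
  -- the normalizing constants are finite and nonzero
  have hbindθ : (ν.bind fun x => Kθ x) Set.univ = 1 := by
    rw [Measure.bind_apply MeasurableSet.univ Kθ.measurable.aemeasurable]
    simp [measure_univ]
  have hbindα : (ν.bind fun x => Kα x) Set.univ = 1 := by
    rw [Measure.bind_apply MeasurableSet.univ Kα.measurable.aemeasurable]
    simp [measure_univ]
  have hfin : ∀ (μ : Measure E), μ Set.univ = 1 →
      (μ.withDensity fun x => ENNReal.ofReal (g x)) Set.univ ≠ ∞ := by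
    intro μ hμ
    have hle : (μ.withDensity fun x => ENNReal.ofReal (g x)) Set.univ ≤ ENNReal.ofReal M := by
      rw [withDensity_apply _ MeasurableSet.univ, Measure.restrict_univ]
      calc ∫⁻ x, ENNReal.ofReal (g x) ∂μ ≤ ∫⁻ _, ENNReal.ofReal M ∂μ :=
            lintegral_mono fun x => ENNReal.ofReal_le_ofReal (hM x)
        _ = ENNReal.ofReal M := by rw [lintegral_const, hμ, mul_one]
    exact ne_top_of_le_ne_top ofReal_ne_top hle
  have hNθtop : mθ Set.univ ≠ ∞ := hfin _ hbindθ
  have hNαtop : mα Set.univ ≠ ∞ := hfin _ hbindα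
  set Nθ := mθ Set.univ with hNθ
  set Nα := mα Set.univ with hNα
  have hNθ0 : Nθ ≠ 0 := hθnorm
  have hNα0 : Nα ≠ 0 := hαnorm
  -- bound the ratio suprema
  set s₁ := ENNReal.ofReal S₁ with hs₁
  set s₂ := ENNReal.ofReal S₂ with hs₂
  have hsup₁ : (⨆ A : {s : Set E // MeasurableSet s},
      filterUpdate Kθ g ν A.1 / filterUpdate Kα g ν A.1) ≤ Nθ⁻¹ * s₁ * Nα := by
    refine iSup_le fun A => ?_
    refine ENNReal.div_le_of_le_mul ?_
    show filterUpdate Kθ g ν A.1 ≤ (Nθ⁻¹ * s₁ * Nα) * filterUpdate Kα g ν A.1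
    have h1 : filterUpdate Kθ g ν A.1 = Nθ⁻¹ * mθ A.1 := by
      rw [filterUpdate, Measure.smul_apply, smul_eq_mul]
    have h2 : filterUpdate Kα g ν A.1 = Nα⁻¹ * mα A.1 := by
      rw [filterUpdate, Measure.smul_apply, smul_eq_mul]
    rw [h1, h2]
    calc Nθ⁻¹ * mθ A.1 ≤ Nθ⁻¹ * (s₁ * mα A.1) := mul_le_mul_right (hm₁ A.1 A.2) _
      _ = (Nα * Nα⁻¹) * (Nθ⁻¹ * (s₁ * mα A.1)) := by
          rw [ENNReal.mul_inv_cancel hNα0 hNαtop, one_mul]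
      _ = (Nθ⁻¹ * s₁ * Nα) * (Nα⁻¹ * mα A.1) := by ring
  have hsup₂ : (⨆ A : {s : Set E // MeasurableSet s},
      filterUpdate Kα g ν A.1 / filterUpdate Kθ g ν A.1) ≤ Nα⁻¹ * s₂ * Nθ := by
    refine iSup_le fun A => ?_
    refine ENNReal.div_le_of_le_mul ?_
    show filterUpdate Kα g ν A.1 ≤ (Nα⁻¹ * s₂ * Nθ) * filterUpdate Kθ g ν A.1
    have h1 : filterUpdate Kα g ν A.1 = Nα⁻¹ * mα A.1 := by
      rw [filterUpdate, Measure.smul_apply, smul_eq_mul]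
    have h2 : filterUpdate Kθ g ν A.1 = Nθ⁻¹ * mθ A.1 := by
      rw [filterUpdate, Measure.smul_apply, smul_eq_mul]
    rw [h1, h2]
    calc Nα⁻¹ * mα A.1 ≤ Nα⁻¹ * (s₂ * mθ A.1) := mul_le_mul_right (hm₂ A.1 A.2) _
      _ = (Nθ * Nθ⁻¹) * (Nα⁻¹ * (s₂ * mθ A.1)) := by
          rw [ENNReal.mul_inv_cancel hNθ0 hNθtop, one_mul]
      _ = (Nα⁻¹ * s₂ * Nθ) * (Nθ⁻¹ * mθ A.1) := by ring
  -- the product of the suprema is at most `s₁ * s₂`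
  have hprod : (⨆ A : {s : Set E // MeasurableSet s},
        filterUpdate Kθ g ν A.1 / filterUpdate Kα g ν A.1) *
      (⨆ A : {s : Set E // MeasurableSet s},
        filterUpdate Kα g ν A.1 / filterUpdate Kθ g ν A.1) ≤ s₁ * s₂ := by
    calc _ ≤ (Nθ⁻¹ * s₁ * Nα) * (Nα⁻¹ * s₂ * Nθ) := mul_le_mul' hsup₁ hsup₂
      _ = (Nθ * Nθ⁻¹) * ((Nα * Nα⁻¹) * (s₁ * s₂)) := by ring
      _ = s₁ * s₂ := by
          rw [ENNReal.mul_inv_cancel hNθ0 hNθtop, ENNReal.mul_inv_cancel hNα0 hNαtop,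
            one_mul, one_mul]
  have hs₁s₂ : s₁ * s₂ = ENNReal.ofReal (S₁ * S₂) := (ENNReal.ofReal_mul hS₁pos.le).symm
  -- the product of the suprema is at least `1`
  have hone : (1:ℝ≥0∞) ≤ (⨆ A : {s : Set E // MeasurableSet s},
        filterUpdate Kθ g ν A.1 / filterUpdate Kα g ν A.1) *
      (⨆ A : {s : Set E // MeasurableSet s},
        filterUpdate Kα g ν A.1 / filterUpdate Kθ g ν A.1) := by
    have huθ : filterUpdate Kθ g ν (Set.univ : Set E) = 1 := by
      rw [filterUpdate, Measure.smul_apply, smul_eq_mul]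
      exact ENNReal.inv_mul_cancel hNθ0 hNθtop
    have huα : filterUpdate Kα g ν (Set.univ : Set E) = 1 := by
      rw [filterUpdate, Measure.smul_apply, smul_eq_mul]
      exact ENNReal.inv_mul_cancel hNα0 hNαtop
    have h1 : (1:ℝ≥0∞) ≤ ⨆ A : {s : Set E // MeasurableSet s},
        filterUpdate Kθ g ν A.1 / filterUpdate Kα g ν A.1 := by
      refine le_iSup_of_le ⟨Set.univ, MeasurableSet.univ⟩ ?_
      simp [huθ, huα]
    have h2 : (1:ℝ≥0∞) ≤ ⨆ A : {s : Set E // MeasurableSet s},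
        filterUpdate Kα g ν A.1 / filterUpdate Kθ g ν A.1 := by
      refine le_iSup_of_le ⟨Set.univ, MeasurableSet.univ⟩ ?_
      simp [huθ, huα]
    calc (1:ℝ≥0∞) = 1 * 1 := (one_mul 1).symm
      _ ≤ _ := mul_le_mul' h1 h2
  constructor
  · -- first inequality
    rw [hilbertDist]
    refine Real.log_le_log ?_ ?_
    · have := ENNReal.toReal_mono (by rw [hs₁s₂] at hprod; exact ne_top_of_le_ne_top ofReal_ne_top hprod) hone
      simpa using lt_of_lt_of_le one_pos this
    · refine ENNReal.toReal_le_of_le_ofReal (mul_nonneg hS₁pos.le hS₂pos.le) ?_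
      rw [← hs₁s₂]; exact hprod
  · -- second inequality
    have hle : S₁ * S₂ ≤ Real.exp d := by
      calc S₁ * S₂ ≤ (c * Real.exp d) * c⁻¹ :=
            mul_le_mul hS₁hi hS₂hi hS₂pos.le hced.le
        _ = Real.exp d * (c * c⁻¹) := by ring
        _ = Real.exp d := by rw [mul_inv_cancel₀ hc.ne', mul_one]
    calc Real.log (S₁ * S₂) ≤ Real.log (Real.exp d) :=
          Real.log_le_log (mul_pos hS₁pos hS₂pos) hle
      _ = d := Real.log_exp d
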